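/- Let G be a simple graph. Suppose there exist G designs of orders 21, 28, 29, 36, 49, 56, 57, 64, 77 and 92, and suppose there exist decompositions into G of the complete multipartite graphs K_{14,14,14}, K_{7,7,7,7}, K_{28,28,28,35}, K_{7,7,7,7,7}, K_{7,7,7,7,21} and K_{7,7,7,7,28}. Then for every nonnegative integer n with n ≡ 0, 1, 8 or 21 (mod 28) and n ≠ 8, there exists a G design of order n. -/

import Mathlib

open SimpleGraph

/-- `K.DecomposesInto G`: a decomposition of `K` into `G`, i.e. a partition of the
edge set of `K` into the edge sets of subgraphs of `K`, each isomorphic to `G`. -/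
def SimpleGraph.DecomposesInto {V : Type*} {W : Type*} (K : SimpleGraph V)
    (G : SimpleGraph W) : Prop :=
  ∃ (ι : Type) (f : ι → K.Subgraph),
    (∀ i, Nonempty (G ≃g (f i).coe)) ∧
    ∀ e ∈ K.edgeSet, ∃! i, e ∈ (f i).edgeSet

/-- A `G` design of order `n`: a decomposition of the complete graph `K_n` on `n`
vertices into `G`. -/
def SimpleGraph.HasDesign {W : Type*} (G : SimpleGraph W) (n : ℕ) : Prop :=
  (⊤ : SimpleGraph (Fin n)).DecomposesInto G

/-- The complete multipartite graph with parts of sizes `m 0, …, m (k-1)`. -/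
def completeMultipartite {k : ℕ} (m : Fin k → ℕ) :
    SimpleGraph ((i : Fin k) × Fin (m i)) :=
  SimpleGraph.completeMultipartiteGraph fun i => Fin (m i)

/-- The set of edges joining consecutive entries of a list of vertices. -/
def consecEdges (l : List ℕ) : Set (Sym2 ℕ) :=
  {e | ∃ p ∈ l.zip l.tail, e = s(p.1, p.2)}

/-- The vertex list of a path of length `len` from vertex `0` to vertex `1` whose
internal vertices are `start, start + 1, …, start + len - 2`. -/
def thetaPath (len start : ℕ) : List ℕ :=
  0 :: ((List.range (len - 1)).map (· + start) ++ [1])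

/-- The theta graph `Θ(a,b,c)` on the vertex set `Fin (a+b+c-1)`: the two vertices
`0` and `1` of degree `3` are joined by three internally disjoint paths, of lengths
`a`, `b` and `c`, whose internal vertices are `2, …, a`, resp. `a+1, …, a+b-1`,
resp. `a+b, …, a+b+c-2`. -/
def thetaGraph (a b c : ℕ) : SimpleGraph (Fin (a + b + c - 1)) :=
  (SimpleGraph.fromEdgeSet
    (consecEdges (thetaPath a 2) ∪ consecEdges (thetaPath b (a + 1)) ∪
      consecEdges (thetaPath c (a + b)))).comap Fin.val

/-!
The construction is Wilson's fundamental construction applied to a transversal design `TD(5, m)`,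
i.e. an orthogonal array `OA(5, m)`; these exist for `m = 4, 5, 8, 9` (finite fields) and are
closed under products. Give weight `7` to the points of the first four groups and weights
`7 x` with `x ∈ {0, 1, 3, 4}` and total `7 y` to the points of the fifth group. Every block then
becomes one of `K_{7,7,7,7}`, `K_{7,7,7,7,7}`, `K_{7,7,7,7,21}`, `K_{7,7,7,7,28}`, so
`K_{7m,7m,7m,7m,7y}` decomposes into `G`; adding `ε ≤ 1` extra points and filling each group
together with them by a design of order `7m + ε` or `7y + ε` gives a design of order
`28m + 7y + ε`. With `m` a power of two (or `5 · 4^c`, `9 · 4^c` when `y` would be `1`), every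
admissible order `n ≥ 112` except `120` is reached from two smaller admissible orders. The orders
`84`, `85`, `105` and `120` come from the same filling argument applied to the inflated `TD(3, 2)`,
to the inflated `4`-GDD of type `3^5`, and to `K_{28,28,28,35}`.
-/

open Function

namespace SimpleGraph

variable {U V W : Type*} {G : SimpleGraph W}

theorem DecomposesInto.of_copies {K : SimpleGraph V} {J : Type} {P : J → Type*}
    {L : ∀ j, SimpleGraph (P j)} (φ : ∀ j, Copy (L j) K) (hL : ∀ j, (L j).DecomposesInto G)
    (hK : ∀ u v, K.Adj u v → ∃! j, ∃ a b, (L j).Adj a b ∧ φ j a = u ∧ φ j b = v) :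
    K.DecomposesInto G := by
  choose ι f hiso hpart using hL
  refine ⟨Σ j, ι j, fun p => (f p.1 p.2).map (φ p.1).toHom,
    fun p => (hiso p.1 p.2).map fun e => e.trans ((φ p.1).isoSubgraphMap _), ?_⟩
  intro e he
  induction e with
  | _ u v =>
  obtain ⟨j, ⟨a, b, hab, rfl, rfl⟩, hj⟩ := hK u v he
  obtain ⟨i, hi, hiu⟩ := hpart j s(a, b) hab
  refine ⟨⟨j, i⟩, ⟨a, b, hi, rfl, rfl⟩, ?_⟩
  rintro ⟨j', i'⟩ ⟨a', b', hab', ha, hb⟩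
  obtain rfl := hj j' ⟨a', b', (f j' i').adj_sub hab', ha, hb⟩
  obtain rfl := (φ j').injective ha
  obtain rfl := (φ j').injective hb
  rw [hiu i' hab']

theorem DecomposesInto.of_copy {L : SimpleGraph U} {K : SimpleGraph V} (φ : Copy L K)
    (hφ : ∀ u v, K.Adj u v → ∃ a b, L.Adj a b ∧ φ a = u ∧ φ b = v) (h : L.DecomposesInto G) :
    K.DecomposesInto G :=
  of_copies (J := Unit) (fun _ => φ) (fun _ => h) fun u v huv =>
    ⟨(), hφ u v huv, fun _ _ => rfl⟩

theorem DecomposesInto.of_iso {L : SimpleGraph U} {K : SimpleGraph V} (e : L ≃g K)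
    (h : L.DecomposesInto G) : K.DecomposesInto G :=
  of_copy e.toCopy
    (fun u v huv => ⟨e.symm u, e.symm v, e.symm.map_adj_iff.2 huv, by simp, by simp⟩) h

theorem DecomposesInto.map {L : SimpleGraph U} (f : U ↪ V) (h : L.DecomposesInto G) :
    (L.map f).DecomposesInto G :=
  of_copy (Embedding.map f L).toCopy (fun u v huv => by simpa using huv) h

theorem DecomposesInto.iSup {J : Type} {H : J → SimpleGraph V} (hdisj : Pairwise (Disjoint on H))
    (hH : ∀ j, (H j).DecomposesInto G) : (⨆ j, H j).DecomposesInto G :=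
  of_copies (fun j => Copy.ofLE _ _ (le_iSup H j)) hH fun u v huv => by
    obtain ⟨j, hj⟩ := iSup_adj.1 huv
    refine ⟨j, ⟨u, v, hj, rfl, rfl⟩, ?_⟩
    rintro j' ⟨a, b, hab, rfl, rfl⟩
    by_contra hne
    exact disjoint_left.1 (hdisj hne) _ _ hab hj

theorem hasDesign_card_iff [Fintype V] :
    G.HasDesign (Fintype.card V) ↔ (⊤ : SimpleGraph V).DecomposesInto G :=
  ⟨.of_iso (Iso.completeGraph (Fintype.equivFin V).symm),
    .of_iso (Iso.completeGraph (Fintype.equivFin V))⟩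

theorem hasDesign_of_le_one {n : ℕ} (hn : n ≤ 1) : G.HasDesign n := by
  have := Fin.subsingleton_iff_le_one.2 hn
  refine ⟨Empty, Empty.elim, fun i => i.elim, fun e he => ?_⟩
  induction e with
  | _ u v => exact absurd (Subsingleton.elim u v) he

theorem DecomposesInto.top_sum {ι : Type} {Y : ι → Type*} {E : Type*} [Subsingleton E]
    (hK : (completeMultipartiteGraph Y).DecomposesInto G)
    (hY : ∀ i, (⊤ : SimpleGraph (Y i ⊕ E)).DecomposesInto G) :
    (⊤ : SimpleGraph ((Σ i, Y i) ⊕ E)).DecomposesInto G := by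
  let H : Option ι → SimpleGraph ((Σ i, Y i) ⊕ E) := fun o =>
    o.elim ((completeMultipartiteGraph Y).map Embedding.inl)
      fun i => (⊤ : SimpleGraph (Y i ⊕ E)).map ((Embedding.sigmaMk i).sumMap (.refl E))
  have hH : (⊤ : SimpleGraph _) = ⨆ o, H o := by
    ext u v
    simp only [top_adj, iSup_adj]
    refine ⟨fun huv => ?_, fun ⟨o, h⟩ => h.ne⟩
    rcases u with ⟨i, a⟩ | e <;> rcases v with ⟨j, b⟩ | e'
    · by_cases hij : i = j
      · subst hij
        exact ⟨some i, (map_adj _ _ _ _).2 ⟨.inl a, .inl b, by simpa using huv, rfl, rfl⟩⟩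
      · exact ⟨none, (map_adj _ _ _ _).2 ⟨⟨i, a⟩, ⟨j, b⟩, hij, rfl, rfl⟩⟩
    · exact ⟨some i, (map_adj _ _ _ _).2 ⟨.inl a, .inr e', by simp, rfl, rfl⟩⟩
    · exact ⟨some j, (map_adj _ _ _ _).2 ⟨.inr e, .inl b, by simp, rfl, rfl⟩⟩
    · exact absurd (congrArg Sum.inr (Subsingleton.elim e e')) huv
  rw [hH]
  refine .iSup ?_ ?_
  · intro o o' hne
    rw [onFun, disjoint_left]
    rintro u v h h'
    rcases o with _ | i <;> rcases o' with _ | i'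
    · exact hne rfl
    · obtain ⟨⟨j, a⟩, ⟨j', b⟩, hjj', rfl, rfl⟩ := (map_adj _ _ _ _).1 h
      obtain ⟨_ | _, _ | _, -, ha, hb⟩ := (map_adj _ _ _ _).1 h' <;> simp_all
    · obtain ⟨⟨j, a⟩, ⟨j', b⟩, hjj', rfl, rfl⟩ := (map_adj _ _ _ _).1 h'
      obtain ⟨_ | _, _ | _, -, ha, hb⟩ := (map_adj _ _ _ _).1 h <;> simp_all
    · obtain ⟨a | e, b | e', hab, rfl, rfl⟩ := (map_adj _ _ _ _).1 h
      rotate_right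
      · exact hab (congrArg Sum.inr (Subsingleton.elim e e'))
      all_goals (obtain ⟨_ | _, _ | _, -, ha, hb⟩ := (map_adj _ _ _ _).1 h' <;> simp_all)
  · rintro (_ | i)
    exacts [hK.map _, (hY i).map _]

theorem hasDesign_of_completeMultipartiteGraph {ι : Type} [Fintype ι] {Y : ι → Type*}
    [∀ i, Fintype (Y i)] (hK : (completeMultipartiteGraph Y).DecomposesInto G) {ε : ℕ}
    (hε : ε ≤ 1) (hY : ∀ i, G.HasDesign (Fintype.card (Y i) + ε)) :
    G.HasDesign (∑ i, Fintype.card (Y i) + ε) := by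
  have := Fin.subsingleton_iff_le_one.2 hε
  have hfill := hK.top_sum (E := Fin ε) fun i =>
    hasDesign_card_iff.1 (by simpa using hY i)
  simpa using hasDesign_card_iff.2 hfill

theorem completeMultipartite_decomposesInto_congr {k : ℕ} {m m' : Fin k → ℕ} (h : m = m') :
    (completeMultipartite m).DecomposesInto G ↔ (completeMultipartite m').DecomposesInto G := by
  rw [h]

theorem completeMultipartite_decomposesInto_of_last_eq_zero {k : ℕ} {m : Fin (k + 1) → ℕ}
    (hm : m (Fin.last k) = 0) (h : (completeMultipartite (m ∘ Fin.castSucc)).DecomposesInto G) :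
    (completeMultipartite m).DecomposesInto G := by
  let f : (Σ i, Fin (m (Fin.castSucc i))) ↪ Σ i, Fin (m i) :=
    .sigmaMap Fin.castSuccEmb fun _ => .refl _
  refine .of_copy ⟨⟨f, fun hij => Fin.castSucc_injective _ |>.ne hij⟩, f.injective⟩ ?_ h
  rintro ⟨i, a⟩ ⟨j, b⟩ hij
  rcases Fin.eq_castSucc_or_eq_last i with ⟨i, rfl⟩ | rfl
  · rcases Fin.eq_castSucc_or_eq_last j with ⟨j, rfl⟩ | rfl
    · exact ⟨⟨i, a⟩, ⟨j, b⟩, fun h => hij (congrArg Fin.castSucc h), rfl, rfl⟩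
    · exact (Fin.cast hm b).elim0
  · exact (Fin.cast hm a).elim0

end SimpleGraph

/-- A group divisible design with groups `Q i` and blocks of size `k`: `β t s` is the `s`-th point
of block `t`. -/
structure IsGDD {ι T : Type*} {Q : ι → Type*} {k : ℕ} (β : T → Fin k → Σ i, Q i) : Prop where
  injective_fst : ∀ t, Injective fun s => (β t s).1
  existsUnique : ∀ p q : Σ i, Q i, p.1 ≠ q.1 → ∃! t, ∃ s s', β t s = p ∧ β t s' = q

namespace IsGDD

variable {W ι : Type*} {G : SimpleGraph W} {T : Type} {Q : ι → Type*} {k : ℕ}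
  {β : T → Fin k → Σ i, Q i}

theorem completeMultipartiteGraph_decomposesInto (hβ : IsGDD β) (w : (Σ i, Q i) → ℕ)
    (hblock : ∀ t, (completeMultipartite fun s => w (β t s)).DecomposesInto G) :
    (completeMultipartiteGraph fun i => Σ q : Q i, Fin (w ⟨i, q⟩)).DecomposesInto G := by
  let K : SimpleGraph (Σ p, Fin (w p)) := (⊤ : SimpleGraph ι).comap fun v => v.1.1
  suffices K.DecomposesInto G from this.of_iso ⟨Equiv.sigmaAssoc _, Iff.rfl⟩
  let emb t : (Σ s, Fin (w (β t s))) ↪ Σ p, Fin (w p) :=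
    .sigmaMap ⟨β t, (hβ.injective_fst t).of_comp⟩ fun _ => .refl _
  have hK : K = ⨆ t, (completeMultipartite fun s => w (β t s)).map (emb t) := by
    ext ⟨p, a⟩ ⟨q, b⟩
    simp only [K, iSup_adj, map_adj, comap_adj, top_adj]
    constructor
    · intro hpq
      obtain ⟨t, ⟨s, s', rfl, rfl⟩, -⟩ := hβ.existsUnique p q hpq
      exact ⟨t, ⟨s, a⟩, ⟨s', b⟩, fun h => hpq (congrArg (fun s => (β t s).1) h), rfl, rfl⟩
    · rintro ⟨t, ⟨s, a'⟩, ⟨s', b'⟩, hss', h1, h2⟩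
      have hp : β t s = p := congrArg Sigma.fst h1
      have hq : β t s' = q := congrArg Sigma.fst h2
      rw [← hp, ← hq]
      exact (hβ.injective_fst t).ne hss'
  rw [hK]
  refine .iSup (fun t t' htt' => disjoint_left.2 ?_) fun t => (hblock t).map _
  rintro u v ⟨-, ⟨s, a⟩, ⟨s', b⟩, hss', rfl, rfl⟩ ⟨-, ⟨r, a'⟩, ⟨r', b'⟩, -, h1, h2⟩
  obtain ⟨t₀, -, ht₀⟩ := hβ.existsUnique _ _ ((hβ.injective_fst t).ne hss')
  exact htt' ((ht₀ t ⟨s, s', rfl, rfl⟩).trans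
    (ht₀ t' ⟨r, r', congrArg Sigma.fst h1, congrArg Sigma.fst h2⟩).symm)

theorem completeMultipartiteGraph_decomposesInto_const (hβ : IsGDD β) {w : ℕ}
    (h : (completeMultipartite fun _ : Fin k => w).DecomposesInto G) :
    (completeMultipartiteGraph fun i => Σ _ : Q i, Fin w).DecomposesInto G :=
  hβ.completeMultipartiteGraph_decomposesInto (fun _ => w) fun _ => h

end IsGDD

/-- An orthogonal array `OA(k, M)` of strength two and index one. Its rows are the blocks of a
transversal design with `k` groups of size `|M|` (see `IsOrthogonalArray.isGDD`). -/
def IsOrthogonalArray {R M : Type*} {k : ℕ} (B : R → Fin k → M) : Prop :=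
  ∀ g g', g ≠ g' → ∀ a b, ∃! r, B r g = a ∧ B r g' = b

def HasOrthogonalArray (k m : ℕ) : Prop :=
  ∃ (R : Type) (B : R → Fin k → Fin m), IsOrthogonalArray B

namespace IsOrthogonalArray

variable {R R' M M' : Type*} {k : ℕ} {B : R → Fin k → M} {B' : R' → Fin k → M'}

theorem map_equiv (hB : IsOrthogonalArray B) (e : M ≃ M') :
    IsOrthogonalArray fun r g => e (B r g) := by
  intro g g' hgg' a b
  simpa only [← e.eq_symm_apply] using hB g g' hgg' (e.symm a) (e.symm b)

theorem prod (hB : IsOrthogonalArray B) (hB' : IsOrthogonalArray B') :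
    IsOrthogonalArray fun (r : R × R') g => (B r.1 g, B' r.2 g) := by
  intro g g' hgg' a b
  obtain ⟨r, hr, hu⟩ := hB g g' hgg' a.1 b.1
  obtain ⟨r', hr', hu'⟩ := hB' g g' hgg' a.2 b.2
  refine ⟨(r, r'), ⟨Prod.ext hr.1 hr'.1, Prod.ext hr.2 hr'.2⟩, fun ⟨s, s'⟩ hs => ?_⟩
  simp only [Prod.ext_iff] at hs
  rw [hu s ⟨hs.1.1, hs.2.1⟩, hu' s' ⟨hs.1.2, hs.2.2⟩]

end IsOrthogonalArray

theorem IsOrthogonalArray.isGDD {R : Type} {M : Type*} {k : ℕ} {B : R → Fin k → M}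
    (hB : IsOrthogonalArray B) :
    IsGDD fun r g => (⟨g, B r g⟩ : Σ _ : Fin k, M) := by
  refine ⟨fun _ => injective_id, fun ⟨g, a⟩ ⟨g', b⟩ hgg' => ?_⟩
  obtain ⟨r, hr, hu⟩ := hB g g' hgg' a b
  refine ⟨r, ⟨g, g', by rw [hr.1], by rw [hr.2]⟩, ?_⟩
  rintro r' ⟨s, s', hs, hs'⟩
  simp only [Sigma.mk.inj_iff, heq_eq_eq] at hs hs'
  obtain ⟨rfl, rfl⟩ := hs
  obtain ⟨rfl, rfl⟩ := hs'
  exact hu r' ⟨rfl, rfl⟩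

theorem isOrthogonalArray_of_det {F : Type*} [Field F] {k : ℕ} (d c : Fin k → F)
    (hdc : ∀ g g', g ≠ g' → d g * c g' - d g' * c g ≠ 0) :
    IsOrthogonalArray fun (r : F × F) g => d g * r.1 + c g * r.2 := by
  intro g g' hgg' a b
  set Δ := d g * c g' - d g' * c g with hΔ
  have hΔ0 : Δ ≠ 0 := hdc g g' hgg'
  -- Cramer's rule
  refine ⟨((a * c g' - b * c g) / Δ, (d g * b - d g' * a) / Δ), ⟨?_, ?_⟩, ?_⟩
  · field_simp
    ring
  · field_simp
    ring
  · rintro ⟨u, v⟩ ⟨hu, hv⟩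
    refine Prod.ext ?_ ?_
    · rw [eq_div_iff hΔ0]
      linear_combination c g' * hu - c g * hv
    · rw [eq_div_iff hΔ0]
      linear_combination d g * hv - d g' * hu

theorem hasOrthogonalArray_of_card_le {F : Type} [Field F] [Fintype F] {k : ℕ}
    (hk : k ≤ Fintype.card F) : HasOrthogonalArray (k + 1) (Fintype.card F) := by
  obtain ⟨e⟩ := Embedding.nonempty_of_card_le (α := Fin k) (β := F) (by simpa using hk)
  refine ⟨F × F, _, (isOrthogonalArray_of_det (Fin.cons 0 fun _ => 1) (Fin.cons 1 e) ?_).map_equiv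
    (Fintype.equivFin F)⟩
  intro g g' hgg'
  cases g using Fin.cases <;> cases g' using Fin.cases <;>
    simp_all [sub_eq_zero, e.injective.eq_iff, Ne.symm]

theorem hasOrthogonalArray_prime_pow {p n k : ℕ} [Fact p.Prime] (hn : n ≠ 0) (hk : k ≤ p ^ n) :
    HasOrthogonalArray (k + 1) (p ^ n) := by
  let _ : Fintype (GaloisField p n) := Fintype.ofFinite _
  have hcard : Fintype.card (GaloisField p n) = p ^ n := by
    rw [← Nat.card_eq_fintype_card, GaloisField.card p n hn]
  exact hcard ▸ hasOrthogonalArray_of_card_le (hcard ▸ hk)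

theorem hasOrthogonalArray_one (k : ℕ) : HasOrthogonalArray k 1 :=
  ⟨Unit, fun _ _ => 0, fun _ _ _ _ _ =>
    ⟨(), ⟨Subsingleton.elim _ _, Subsingleton.elim _ _⟩, fun _ _ => rfl⟩⟩

theorem HasOrthogonalArray.mul {k m m' : ℕ} (h : HasOrthogonalArray k m)
    (h' : HasOrthogonalArray k m') : HasOrthogonalArray k (m * m') := by
  obtain ⟨R, B, hB⟩ := h
  obtain ⟨R', B', hB'⟩ := h'
  exact ⟨R × R', _, (hB.prod hB').map_equiv finProdFinEquiv⟩

theorem HasOrthogonalArray.pow {k m : ℕ} (h : HasOrthogonalArray k m) (n : ℕ) :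
    HasOrthogonalArray k (m ^ n) := by
  induction n with
  | zero => exact hasOrthogonalArray_one k
  | succ n ih => exact pow_succ m n ▸ ih.mul h

theorem hasOrthogonalArray_five {q : ℕ} (hq : q = 4 ∨ q = 5 ∨ q = 8 ∨ q = 9) :
    HasOrthogonalArray 5 q := by
  have : Fact (Nat.Prime 5) := ⟨by norm_num⟩
  rcases hq with rfl | rfl | rfl | rfl
  · exact hasOrthogonalArray_prime_pow (p := 2) (n := 2) two_ne_zero le_rfl
  · exact hasOrthogonalArray_prime_pow (p := 5) (n := 1) one_ne_zero (by norm_num)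
  · exact hasOrthogonalArray_prime_pow (p := 2) (n := 3) three_ne_zero (by norm_num)
  · exact hasOrthogonalArray_prime_pow (p := 3) (n := 2) two_ne_zero (by norm_num)

theorem Finset.sum_range_min_sub_mul (c y m : ℕ) :
    ∑ a ∈ Finset.range m, min c (y - c * a) = min y (c * m) := by
  induction m with
  | zero => simp
  | succ m ih =>
    rw [Finset.sum_range_succ, ih, mul_add_one]
    omega

namespace SimpleGraph

variable {W : Type*} {G : SimpleGraph W}

theorem hasDesign_of_hasOrthogonalArray
    (hK4 : (completeMultipartite ![7, 7, 7, 7]).DecomposesInto G)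
    (hK5 : (completeMultipartite ![7, 7, 7, 7, 7]).DecomposesInto G)
    (hK21 : (completeMultipartite ![7, 7, 7, 7, 21]).DecomposesInto G)
    (hK28 : (completeMultipartite ![7, 7, 7, 7, 28]).DecomposesInto G)
    {m y ε : ℕ} (hm : HasOrthogonalArray 5 m) (hy : y ≤ 4 * m) (hy2 : y % 4 ≠ 2) (hε : ε ≤ 1)
    (hm' : G.HasDesign (7 * m + ε)) (hy' : G.HasDesign (7 * y + ε)) :
    G.HasDesign (28 * m + 7 * y + ε) := by
  obtain ⟨R, B, hB⟩ := hm
  -- the weights of the fifth group, divided by 7: `4, …, 4, y % 4, 0, …, 0`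
  let x : Fin m → ℕ := fun a => min 4 (y - 4 * a)
  have hx : ∑ a, x a = y := by
    rw [Fin.sum_univ_eq_sum_range (fun a => min 4 (y - 4 * a)),
      Finset.sum_range_min_sub_mul]
    omega
  let w : (Σ _ : Fin 5, Fin m) → ℕ := fun p => if p.1 = 4 then 7 * x p.2 else 7
  have hK : ∀ n, n = 0 ∨ n = 1 ∨ n = 3 ∨ n = 4 →
      (completeMultipartite ![7, 7, 7, 7, 7 * n]).DecomposesInto G := by
    rintro n (rfl | rfl | rfl | rfl)
    · refine completeMultipartite_decomposesInto_of_last_eq_zero rfl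
        ((completeMultipartite_decomposesInto_congr ?_).2 hK4)
      funext i
      fin_cases i <;> rfl
    exacts [hK5, hK21, hK28]
  have hblock : ∀ r, (completeMultipartite fun g => w ⟨g, B r g⟩).DecomposesInto G := by
    intro r
    have hw : (fun g => w ⟨g, B r g⟩) = ![7, 7, 7, 7, 7 * x (B r 4)] := by
      funext g
      fin_cases g <;> rfl
    exact (completeMultipartite_decomposesInto_congr hw).2 (hK _ (by simp only [x]; omega))
  have := hasDesign_of_completeMultipartiteGraph
    (hB.isGDD.completeMultipartiteGraph_decomposesInto w hblock) hε ?_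
  · convert this using 2
    simp [Fin.sum_univ_five, w, ← Finset.mul_sum, hx]
    ring
  · intro g
    fin_cases g
    all_goals first
      | simpa [w, mul_comm] using hm'
      | simpa [w, ← Finset.mul_sum, hx] using hy'

end SimpleGraph

/-- The blocks of a `4`-GDD of type `3^5`. -/
def gdd3pow5 : Fin 15 → Fin 4 → Σ _ : Fin 5, Fin 3 :=
  ![![⟨1, 0⟩, ⟨2, 0⟩, ⟨3, 2⟩, ⟨4, 1⟩],
    ![⟨1, 1⟩, ⟨2, 1⟩, ⟨3, 0⟩, ⟨4, 2⟩],
    ![⟨1, 2⟩, ⟨2, 2⟩, ⟨3, 1⟩, ⟨4, 0⟩],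
    ![⟨0, 0⟩, ⟨2, 0⟩, ⟨3, 0⟩, ⟨4, 0⟩],
    ![⟨0, 1⟩, ⟨2, 1⟩, ⟨3, 1⟩, ⟨4, 1⟩],
    ![⟨0, 2⟩, ⟨2, 2⟩, ⟨3, 2⟩, ⟨4, 2⟩],
    ![⟨0, 0⟩, ⟨1, 0⟩, ⟨3, 1⟩, ⟨4, 2⟩],
    ![⟨0, 1⟩, ⟨1, 1⟩, ⟨3, 2⟩, ⟨4, 0⟩],
    ![⟨0, 2⟩, ⟨1, 2⟩, ⟨3, 0⟩, ⟨4, 1⟩],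
    ![⟨0, 2⟩, ⟨1, 0⟩, ⟨2, 1⟩, ⟨4, 0⟩],
    ![⟨0, 0⟩, ⟨1, 1⟩, ⟨2, 2⟩, ⟨4, 1⟩],
    ![⟨0, 1⟩, ⟨1, 2⟩, ⟨2, 0⟩, ⟨4, 2⟩],
    ![⟨0, 1⟩, ⟨1, 0⟩, ⟨2, 2⟩, ⟨3, 0⟩],
    ![⟨0, 2⟩, ⟨1, 1⟩, ⟨2, 0⟩, ⟨3, 1⟩],
    ![⟨0, 0⟩, ⟨1, 2⟩, ⟨2, 1⟩, ⟨3, 2⟩]]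

instance {α : Type*} [Fintype α] [DecidableEq α] (p : α → Prop) [DecidablePred p] :
    Decidable (∃! a, p a) :=
  inferInstanceAs (Decidable (∃ a, p a ∧ ∀ b, p b → b = a))

theorem isGDD_gdd3pow5 : IsGDD gdd3pow5 := ⟨by decide, by decide⟩

namespace SimpleGraph

variable {W : Type*} {G : SimpleGraph W}

theorem hasDesign_84_add (hK : (completeMultipartite ![14, 14, 14]).DecomposesInto G) {ε : ℕ}
    (hε : ε ≤ 1) (h : G.HasDesign (28 + ε)) : G.HasDesign (84 + ε) := by
  obtain ⟨R, B, hB⟩ := hasOrthogonalArray_prime_pow (p := 2) (n := 1) (k := 2) one_ne_zero le_rfl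
  have hK' : (completeMultipartite fun _ : Fin 3 => 14).DecomposesInto G :=
    (completeMultipartite_decomposesInto_congr (by funext g; fin_cases g <;> rfl)).2 hK
  simpa using hasDesign_of_completeMultipartiteGraph
    (hB.isGDD.completeMultipartiteGraph_decomposesInto_const hK') hε fun _ => by simpa using h

theorem hasDesign_105 (hK : (completeMultipartite ![7, 7, 7, 7]).DecomposesInto G)
    (h : G.HasDesign 21) : G.HasDesign 105 := by
  have hK' : (completeMultipartite fun _ : Fin 4 => 7).DecomposesInto G :=
    (completeMultipartite_decomposesInto_congr (by funext g; fin_cases g <;> rfl)).2 hK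
  simpa using hasDesign_of_completeMultipartiteGraph (ε := 0)
    (isGDD_gdd3pow5.completeMultipartiteGraph_decomposesInto_const hK') zero_le_one
    fun _ => by simpa using h

theorem hasDesign_120 (hK : (completeMultipartite ![28, 28, 28, 35]).DecomposesInto G)
    (h29 : G.HasDesign 29) (h36 : G.HasDesign 36) : G.HasDesign 120 := by
  simpa [Fin.sum_univ_four] using hasDesign_of_completeMultipartiteGraph hK le_rfl (ε := 1)
    fun i => by fin_cases i <;> simpa

end SimpleGraph

def AdmissibleOrder (n : ℕ) : Prop :=
  (n % 28 = 0 ∨ n % 28 = 1 ∨ n % 28 = 8 ∨ n % 28 = 21) ∧ n ≠ 8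

theorem exists_pow_four_le_lt {s : ℕ} (hs : 16 ≤ s) : ∃ c, 16 * 4 ^ c ≤ s ∧ s < 64 * 4 ^ c := by
  have hlog : 2 ≤ Nat.log 4 s := (Nat.le_log_iff_pow_le (x := 2) (by norm_num) (by omega)).2 hs
  obtain ⟨c, hc⟩ : ∃ c, Nat.log 4 s = c + 2 := ⟨Nat.log 4 s - 2, by omega⟩
  refine ⟨c, ?_, ?_⟩
  · have := Nat.pow_log_le_self 4 (x := s) (by omega)
    rw [hc, pow_add] at this
    linarith
  · have := Nat.lt_pow_succ_log_self (b := 4) (by norm_num) s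
    rw [hc, pow_succ, pow_add] at this
    linarith

theorem pow_four_eq_one_or_mod_four (c : ℕ) : 4 ^ c = 1 ∨ 4 ^ c % 4 = 0 := by
  rcases c with _ | c
  · simp
  · simp [pow_succ]

theorem AdmissibleOrder.exists_split {N : ℕ} (hN : AdmissibleOrder N) (h112 : 112 ≤ N)
    (h120 : N ≠ 120) :
    ∃ m y ε, HasOrthogonalArray 5 m ∧ y ≤ 4 * m ∧ y % 4 ≠ 2 ∧ ε ≤ 1 ∧ N = 28 * m + 7 * y + ε ∧
      AdmissibleOrder (7 * m + ε) ∧ AdmissibleOrder (7 * y + ε) := by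
  unfold AdmissibleOrder at *
  have hOA {b} (hb : b = 4 ∨ b = 5 ∨ b = 8 ∨ b = 9) (c : ℕ) : HasOrthogonalArray 5 (b * 4 ^ c) :=
    (hasOrthogonalArray_five hb).mul ((hasOrthogonalArray_five (.inl rfl)).pow c)
  -- `m = 4 · 4^c` or `8 · 4^c` with `4m ≤ N / 7 < 8m`; if that leaves `7y + ε = 8`,
  -- then `m = 5 · 4^c` or `9 · 4^(c-1)` instead
  obtain ⟨c, hlo, hhi⟩ := exists_pow_four_le_lt (s := N / 7) (by omega)
  have hc := pow_four_eq_one_or_mod_four c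
  by_cases h32 : N % 7 = 1 ∧ N / 7 = 32 * 4 ^ c + 1
  · exact ⟨_, 12 * 4 ^ c + 1, 1, hOA (b := 5) (by norm_num) c, by omega⟩
  by_cases h16 : N % 7 = 1 ∧ N / 7 = 16 * 4 ^ c + 1
  · rcases c with _ | c
    · omega
    · have hc' := pow_four_eq_one_or_mod_four c
      rw [pow_succ] at hlo hhi h16 hc
      exact ⟨_, 28 * 4 ^ c + 1, 1, hOA (b := 9) (by norm_num) c, by omega⟩
  by_cases hlt : N / 7 < 32 * 4 ^ c
  · exact ⟨_, N / 7 - 16 * 4 ^ c, N % 7, hOA (b := 4) (by norm_num) c, by omega⟩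
  · exact ⟨_, N / 7 - 32 * 4 ^ c, N % 7, hOA (b := 8) (by norm_num) c, by omega⟩

theorem theta14_master_construction {V : Type*} (G : SimpleGraph V)
    (h1 : G.HasDesign 21)
    (h2 : G.HasDesign 28)
    (h3 : G.HasDesign 29)
    (h4 : G.HasDesign 36)
    (h5 : G.HasDesign 49)
    (h6 : G.HasDesign 56)
    (h7 : G.HasDesign 57)
    (h8 : G.HasDesign 64)
    (h9 : G.HasDesign 77)
    (h10 : G.HasDesign 92)
    (m1 : (completeMultipartite ![14, 14, 14]).DecomposesInto G)
    (m2 : (completeMultipartite ![7, 7, 7, 7]).DecomposesInto G)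
    (m3 : (completeMultipartite ![28, 28, 28, 35]).DecomposesInto G)
    (m4 : (completeMultipartite ![7, 7, 7, 7, 7]).DecomposesInto G)
    (m5 : (completeMultipartite ![7, 7, 7, 7, 21]).DecomposesInto G)
    (m6 : (completeMultipartite ![7, 7, 7, 7, 28]).DecomposesInto G)
    (n : ℕ) (hn : n % 28 = 0 ∨ n % 28 = 1 ∨ n % 28 = 8 ∨ n % 28 = 21) (hne1 : n ≠ 8) :
    G.HasDesign n := by
  suffices ∀ n, AdmissibleOrder n → G.HasDesign n from this n ⟨hn, hne1⟩
  intro n hn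
  induction n using Nat.strong_induction_on with
  | _ n ih =>
  by_cases hlarge : 112 ≤ n ∧ n ≠ 120
  · obtain ⟨m, y, ε, hm, hy, hy2, hε, rfl, hm', hy'⟩ := hn.exists_split hlarge.1 hlarge.2
    exact hasDesign_of_hasOrthogonalArray m2 m4 m5 m6 hm hy hy2 hε
      (ih _ (by omega) hm') (ih _ (by omega) hy')
  · have hsmall : n ≤ 1 ∨ n = 21 ∨ n = 28 ∨ n = 29 ∨ n = 36 ∨ n = 49 ∨ n = 56 ∨ n = 57 ∨
        n = 64 ∨ n = 77 ∨ n = 84 ∨ n = 85 ∨ n = 92 ∨ n = 105 ∨ n = 120 := by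
      unfold AdmissibleOrder at hn
      omega
    rcases hsmall with h | rfl | rfl | rfl | rfl | rfl | rfl | rfl | rfl | rfl | rfl | rfl | rfl |
      rfl | rfl
    exacts [hasDesign_of_le_one h, h1, h2, h3, h4, h5, h6, h7, h8, h9,
      hasDesign_84_add m1 zero_le_one h2, hasDesign_84_add m1 le_rfl h3, h10,
      hasDesign_105 m2 h1, hasDesign_120 m3 h3 h4]
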